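/- arXiv:2107.01906 — 6 statements merged into one kernel-verified Lean document; each statement's English description precedes it below -/
import Mathlib

section
/- Let a : ℕ → ℝ be a sequence of non-negative reals, γ : ℕ → ℝ a sequence of positive reals, and α > 0. If for all t in {1,...,T-1} we have a_{t+1} ≤ a_t − γ_t · a_t^{1+α}, then a_T ≤ a_1 / (1 + α · a_1^α · Σ_{t=1}^{T−1} γ_t)^{1/α}. -/
/-!
With `b t = a t ^ (-α)`, the tangent-line (Bernoulli) inequality for the convex function
`x ↦ x ^ (-α)` turns each descent step into `b (t + 1) ≥ b t + α * γ t`. Summing gives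
`a T ^ (-α) ≥ a 1 ^ (-α) + α * ∑ γ t`, which rearranges to the bound. Division by `a t` is
harmless: either `a T = 0`, or the sequence, being decreasing, stays positive up to `T`.
-/

open Finset

theorem one_add_mul_self_le_rpow_one_add_of_nonpos {s : ℝ} (hs : -1 < s) {p : ℝ} (hp : p ≤ 0) :
    1 + p * s ≤ (1 + s) ^ p := by
  have hs₀ : 0 < 1 + s := by linarith
  -- Bernoulli with exponent `1 - p ≥ 1` at the point `(1 + s)⁻¹ - 1`, then multiply by `1 + s`.
  have bernoulli := one_add_mul_self_le_rpow_one_add (s := (1 + s)⁻¹ - 1) (p := 1 - p)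
    (by linarith [inv_pos.2 hs₀]) (by linarith)
  rw [add_sub_cancel, Real.inv_rpow hs₀.le, ← Real.rpow_neg hs₀.le] at bernoulli
  calc 1 + p * s = (1 + (1 - p) * ((1 + s)⁻¹ - 1)) * (1 + s) := by field_simp; ring
    _ ≤ (1 + s) ^ (-(1 - p)) * (1 + s) := by gcongr
    _ = (1 + s) ^ p := by rw [← Real.rpow_add_one hs₀.ne']; ring_nf

theorem rpow_neg_add_mul_le_rpow_neg_of_le_sub {u v g α : ℝ} (hu₀ : 0 ≤ u) (hv : 0 < v)
    (hα : 0 ≤ α) (h : v ≤ u - g * u ^ (1 + α)) : u ^ (-α) + α * g ≤ v ^ (-α) := by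
  have hu : 0 < u := by
    rcases hu₀.eq_or_lt with rfl | hu
    · rw [Real.zero_rpow (by linarith)] at h
      linarith
    · exact hu
  have hg : g ≤ (u - v) * u ^ (-(1 + α)) := by
    rw [Real.rpow_neg hu.le, ← div_eq_mul_inv, le_div_iff₀ (by positivity)]
    linarith
  have tangent := one_add_mul_self_le_rpow_one_add_of_nonpos (s := v / u - 1) (p := -α)
    (by linarith [div_pos hv hu]) (by linarith)
  rw [add_sub_cancel, Real.div_rpow hv.le hu.le, le_div_iff₀ (by positivity)] at tangent
  have hu_rpow : u ^ (-α) = u ^ (-(1 + α)) * u := by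
    rw [← Real.rpow_add_one hu.ne']
    ring_nf
  calc u ^ (-α) + α * g ≤ u ^ (-α) + α * ((u - v) * u ^ (-(1 + α))) := by gcongr
    _ = (1 + -α * (v / u - 1)) * u ^ (-α) := by rw [hu_rpow]; field_simp; ring
    _ ≤ v ^ (-α) := tangent

theorem add_sum_Ico_le_of_add_le_succ {M : Type*} [AddCommMonoid M] [PartialOrder M]
    [IsOrderedAddMonoid M] {f d : ℕ → M} {m n : ℕ} (hmn : m ≤ n)
    (h : ∀ t, m ≤ t → t < n → f t + d t ≤ f (t + 1)) : f m + ∑ t ∈ Ico m n, d t ≤ f n := by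
  induction n, hmn using Nat.le_induction with
  | base => simp
  | succ n hmn ih =>
    rw [sum_Ico_succ_top hmn, ← add_assoc]
    exact (add_le_add (ih fun t ht hn ↦ h t ht (by omega)) le_rfl).trans (h n hmn (by omega))

theorem le_div_rpow_of_rpow_neg_add_le {x y S α : ℝ} (hx : 0 < x) (hy : 0 < y) (hS : 0 ≤ S)
    (hα : 0 < α) (h : y ^ (-α) + α * S ≤ x ^ (-α)) :
    x ≤ y / (1 + α * y ^ α * S) ^ (1 / α) := by
  have hX : 0 < x ^ α := by positivity
  have hY : 0 < y ^ α := by positivity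
  have hD : 0 < 1 + α * y ^ α * S := by positivity
  rw [Real.rpow_neg hx.le, Real.rpow_neg hy.le] at h
  have hXY : x ^ α ≤ y ^ α / (1 + α * y ^ α * S) := by
    rw [le_div_iff₀ hD]
    calc x ^ α * (1 + α * y ^ α * S) = x ^ α * y ^ α * ((y ^ α)⁻¹ + α * S) := by field_simp
      _ ≤ x ^ α * y ^ α * (x ^ α)⁻¹ := by gcongr
      _ = y ^ α := by field_simp
  calc x = (x ^ α) ^ (1 / α) := by rw [one_div, Real.rpow_rpow_inv hx.le hα.ne']
    _ ≤ (y ^ α / (1 + α * y ^ α * S)) ^ (1 / α) := by gcongr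
    _ = y / (1 + α * y ^ α * S) ^ (1 / α) := by
      rw [Real.div_rpow hY.le hD.le, one_div, Real.rpow_rpow_inv hy.le hα.ne']

/-- Polyak's lemma on decreasing sequences (Polyak, §2.2, Lemma 6). -/
theorem polyak_sequence_lemma
    (a γ : ℕ → ℝ) (α : ℝ) (T : ℕ)
    (hT : 1 ≤ T)
    (ha : ∀ t, 0 ≤ a t)
    (hγ : ∀ t, 0 < γ t)
    (hα : 0 < α)
    (hrec : ∀ t, 1 ≤ t → t ≤ T - 1 → a (t + 1) ≤ a t - γ t * a t ^ (1 + α)) :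
    a T ≤ a 1 / (1 + α * a 1 ^ α * ∑ t ∈ Finset.Icc 1 (T - 1), γ t) ^ (1 / α) := by
  have hS : 0 ≤ ∑ t ∈ Icc 1 (T - 1), γ t := sum_nonneg fun t _ ↦ (hγ t).le
  rcases (ha T).eq_or_lt with haT | haT
  · rw [← haT]
    have := ha 1
    positivity
  have hanti : AntitoneOn a (Set.Icc 1 T) := by
    refine antitoneOn_of_succ_le Set.ordConnected_Icc fun t _ ht ht' ↦ ?_
    rw [Order.succ_eq_add_one] at ht' ⊢
    have hstep := hrec t ht.1 (by have := ht'.2; omega)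
    exact hstep.trans (sub_le_self _ (mul_nonneg (hγ t).le (Real.rpow_nonneg (ha t) _)))
  have hpos : ∀ t, 1 ≤ t → t ≤ T → 0 < a t := fun t h1 h2 ↦
    haT.trans_le (hanti ⟨h1, h2⟩ ⟨hT, le_rfl⟩ h2)
  have hgrowth : a 1 ^ (-α) + ∑ t ∈ Ico 1 T, α * γ t ≤ a T ^ (-α) :=
    add_sum_Ico_le_of_add_le_succ hT fun t h1 h2 ↦
      rpow_neg_add_mul_le_rpow_neg_of_le_sub (ha t) (hpos (t + 1) (by omega) h2) hα.le
        (hrec t h1 (by omega))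
  rw [← mul_sum, ← Icc_sub_one_right_eq_Ico_of_not_isMin (by simp; omega)] at hgrowth
  exact le_div_rpow_of_rpow_neg_add_le haT (hpos 1 le_rfl hT) hS hα hgrowth
end

section
/- Let a : ℕ → ℝ be non-negative, q, q' > 0, t₀ ≥ 0, and 1/2 < p < 1. If for all t ≥ 1, a_{t+1} ≤ (1 − q/(t+t₀)^p) · a_t + q'/(t+t₀)^{2p}, then a_T = O(1/T^p) as T → ∞. -/
/-!
With `s = t + t₀`, the bound `a t ≤ C / s ^ p` propagates from `t` to `t + 1` once `s` is
large, provided `C ≥ max 0 (2 q' / q)`: the recursion gives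
`a (t + 1) ≤ C (s ^ p - q / 2) / s ^ (2p)`, while Bernoulli's inequality
`(s + 1) ^ p ≤ s ^ p (1 + p / s)` shows that this is at most `C / (s + 1) ^ p` as soon as
`2 p s ^ p ≤ q s`, which holds eventually because `p < 1`. Starting the induction at a large
enough index gives `a t = O(1 / (t + t₀) ^ p) = O(1 / t ^ p)`.
-/

open Filter Asymptotics

namespace ChungLemma

lemma add_one_rpow_le {s p : ℝ} (hs : 0 < s) (hp0 : 0 ≤ p) (hp1 : p ≤ 1) :
    (s + 1) ^ p ≤ s ^ p * (1 + p / s) :=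
  calc (s + 1) ^ p = s ^ p * (1 + 1 / s) ^ p := by
        rw [← Real.mul_rpow hs.le (by positivity), mul_one_add, mul_one_div_cancel hs.ne']
    _ ≤ s ^ p * (1 + p * (1 / s)) := by
        gcongr
        exact rpow_one_add_le_one_add_mul_self (by linarith [one_div_pos.2 hs]) hp0 hp1
    _ = s ^ p * (1 + p / s) := by rw [mul_one_div]

lemma sub_half_mul_add_one_rpow_le {s p q : ℝ} (hs : 0 < s) (hp0 : 0 ≤ p) (hp1 : p ≤ 1)
    (hq : 0 ≤ q) (hqs : q ≤ s ^ p) (hps : 2 * p * s ^ p ≤ q * s) :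
    (s ^ p - q / 2) * (s + 1) ^ p ≤ s ^ p * s ^ p := by
  have hA : 0 < s ^ p := Real.rpow_pos_of_pos hs p
  calc (s ^ p - q / 2) * (s + 1) ^ p ≤ (s ^ p - q / 2) * (s ^ p * (1 + p / s)) := by
        gcongr
        · linarith
        · exact add_one_rpow_le hs hp0 hp1
    _ = s ^ p * (s ^ p - (q * s - 2 * p * s ^ p + p * q) / (2 * s)) := by
        field_simp
        ring
    _ ≤ s ^ p * s ^ p := by
        gcongr
        exact sub_le_self _ (by positivity)

lemma chung_recursion_step {s p q q' C x : ℝ} (hs : 0 < s) (hp0 : 0 ≤ p) (hp1 : p ≤ 1)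
    (hq : 0 ≤ q) (hqs : q ≤ s ^ p) (hps : 2 * p * s ^ p ≤ q * s) (hC : 0 ≤ C)
    (hq'C : 2 * q' ≤ q * C) (hx : x ≤ C / s ^ p) :
    (1 - q / s ^ p) * x + q' / s ^ (2 * p) ≤ C / (s + 1) ^ p := by
  have hA : 0 < s ^ p := Real.rpow_pos_of_pos hs p
  have hfactor : 0 ≤ 1 - q / s ^ p := sub_nonneg.2 ((div_le_one hA).2 hqs)
  rw [two_mul, Real.rpow_add hs]
  calc (1 - q / s ^ p) * x + q' / (s ^ p * s ^ p)
      ≤ (1 - q / s ^ p) * (C / s ^ p) + q' / (s ^ p * s ^ p) := by gcongr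
    _ = ((s ^ p - q) * C + q') / (s ^ p * s ^ p) := by field_simp
    _ ≤ C * (s ^ p - q / 2) / (s ^ p * s ^ p) := by gcongr; linarith
    _ ≤ C / (s + 1) ^ p := by
        rw [div_le_div_iff₀ (by positivity) (by positivity), mul_assoc]
        exact mul_le_mul_of_nonneg_left (sub_half_mul_add_one_rpow_le hs hp0 hp1 hq hqs hps) hC

lemma eventually_chung_recursion_step_conditions {p q : ℝ} (hq : 0 < q) (hp0 : 0 < p)
    (hp1 : p < 1) :
    ∀ᶠ s : ℝ in atTop, 0 < s ∧ q ≤ s ^ p ∧ 2 * p * s ^ p ≤ q * s := by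
  filter_upwards [eventually_gt_atTop 0, (tendsto_rpow_atTop hp0).eventually_ge_atTop q,
    (tendsto_rpow_atTop (sub_pos.2 hp1)).eventually_ge_atTop (2 * p / q)] with s hs hqs hps
  refine ⟨hs, hqs, ?_⟩
  calc 2 * p * s ^ p = q * (2 * p / q * s ^ p) := by field_simp
    _ ≤ q * (s ^ (1 - p) * s ^ p) := by gcongr
    _ = q * s := by rw [← Real.rpow_add hs, sub_add_cancel, Real.rpow_one]

theorem exists_eventually_le_div_rpow_of_chung_recursion (a : ℕ → ℝ) {q q' t₀ p : ℝ}
    (hq : 0 < q) (hp0 : 0 < p) (hp1 : p < 1)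
    (hrec : ∀ᶠ t : ℕ in atTop,
      a (t + 1) ≤ (1 - q / ((t : ℝ) + t₀) ^ p) * a t + q' / ((t : ℝ) + t₀) ^ (2 * p)) :
    ∃ C, ∀ᶠ t : ℕ in atTop, a t ≤ C / ((t : ℝ) + t₀) ^ p := by
  have hshift : Tendsto (fun t : ℕ => (t : ℝ) + t₀) atTop atTop :=
    tendsto_atTop_add_const_right _ t₀ tendsto_natCast_atTop_atTop
  obtain ⟨N, hN⟩ := eventually_atTop.1
    (hrec.and (hshift.eventually (eventually_chung_recursion_step_conditions hq hp0 hp1)))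
  set C := max (max 0 (2 * q' / q)) (a N * ((N : ℝ) + t₀) ^ p)
  have hC : 0 ≤ C := (le_max_left _ _).trans (le_max_left _ _)
  have hq'C : 2 * q' ≤ q * C := by
    rw [← div_le_iff₀' hq]
    exact (le_max_right _ _).trans (le_max_left _ _)
  refine ⟨C, eventually_atTop.2 ⟨N, fun t ht => ?_⟩⟩
  induction t, ht using Nat.le_induction with
  | base =>
    rw [le_div_iff₀ (Real.rpow_pos_of_pos (hN N le_rfl).2.1 p)]
    exact le_max_right _ _
  | succ t ht ih =>
    obtain ⟨hrec_t, hs, hqs, hps⟩ := hN t ht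
    push_cast
    rw [add_right_comm]
    exact hrec_t.trans (chung_recursion_step hs hp0.le hp1.le hq.le hqs hps hC hq'C ih)

lemma isBigO_one_div_natCast_add_rpow (t₀ p : ℝ) :
    (fun T : ℕ => 1 / ((T : ℝ) + t₀) ^ p) =O[atTop] (fun T : ℕ => 1 / (T : ℝ) ^ p) := by
  have hnorm : Tendsto (fun T : ℕ => ‖(T : ℝ)‖) atTop atTop :=
    tendsto_natCast_atTop_atTop.congr' (by simp)
  have hequiv : (fun T : ℕ => (T : ℝ) + t₀) ~[atTop] (fun T : ℕ => (T : ℝ)) :=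
    IsEquivalent.refl.add_const_of_norm_tendsto_atTop hnorm
  simpa only [one_div, Pi.inv_def, Pi.pow_def] using
    (hequiv.rpow (fun T => T.cast_nonneg) (r := p)).inv.isBigO

end ChungLemma

open ChungLemma

theorem chung_lemma_4_general
    (a : ℕ → ℝ) (q q' t₀ p : ℝ)
    (ha : ∀ t, 0 ≤ a t)
    (hq : 0 < q)
    (hp1 : 1 / 2 < p) (hp2 : p < 1)
    (hrec : ∀ t : ℕ, 1 ≤ t →
      a (t + 1) ≤ (1 - q / ((t : ℝ) + t₀) ^ p) * a t + q' / ((t : ℝ) + t₀) ^ (2 * p)) :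
    (fun T : ℕ => a T) =O[atTop] (fun T : ℕ => 1 / (T : ℝ) ^ p) := by
  obtain ⟨C, hC⟩ := exists_eventually_le_div_rpow_of_chung_recursion a hq (by linarith) hp2
    (eventually_atTop.2 ⟨1, hrec⟩)
  have hbound : (fun T : ℕ => a T) =O[atTop] (fun T : ℕ => C * (1 / ((T : ℝ) + t₀) ^ p)) :=
    .of_norm_eventuallyLE <| hC.mono fun T hT => by
      dsimp only
      rwa [Real.norm_of_nonneg (ha T), mul_one_div]
  exact (hbound.trans (isBigO_const_mul_self C _ _)).trans (isBigO_one_div_natCast_add_rpow t₀ p)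

/-- Chung's Lemma 4 (Chung 1954). -/
theorem chung_lemma_4
    (a : ℕ → ℝ) (q q' t₀ p : ℝ)
    (ha : ∀ t, 0 ≤ a t)
    (hq : 0 < q) (hq' : 0 < q') (ht₀ : 0 ≤ t₀)
    (hp1 : 1 / 2 < p) (hp2 : p < 1)
    (hrec : ∀ t : ℕ, 1 ≤ t →
      a (t + 1) ≤ (1 - q / ((t : ℝ) + t₀) ^ p) * a t + q' / ((t : ℝ) + t₀) ^ (2 * p)) :
    (fun T : ℕ => a T) =O[atTop] (fun T : ℕ => 1 / (T : ℝ) ^ p) :=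
  chung_lemma_4_general a q q' t₀ p ha hq hp1 hp2 hrec
end

section
/- Let a : ℕ → ℝ be non-negative, q > 1, q' > 0, t₀ ≥ 0. If for all t ≥ 1, a_{t+1} ≤ (1 − q/(t+t₀)) · a_t + q'/(t+t₀)², then a_T ≤ q'/((q−1)(T+t₀)) + o(1/T). -/
open Filter Asymptotics

/-!
The sequence `b t = q' / ((q - 1) (t + t₀))` is a supersolution of the recursion: it satisfies
`b (t+1) ≥ (1 - q / (t + t₀)) b t + q' / (t + t₀)²`. Hence the excess `(a t - b t)⁺` contracts by
the factor `1 - q / (t + t₀)` once that factor is nonnegative. By Bernoulli's inequality this factor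
is at most `((t + t₀) / (t + t₀ + 1)) ^ q`, so `(a t - b t)⁺ (t + t₀) ^ q` is eventually
nonincreasing, and the excess is `O(t ^ (-q)) = o(1 / t)` because `q > 1`.
-/

namespace Chung

lemma one_sub_div_le_div_add_one_rpow {q s : ℝ} (hq : 1 ≤ q) (hs : 0 < s) :
    1 - q / s ≤ (s / (s + 1)) ^ q := by
  have hs1 : 0 < s + 1 := by linarith
  have hbern := one_add_mul_self_le_rpow_one_add
    (by rw [neg_le, neg_neg, div_le_one hs1]; linarith : (-1 : ℝ) ≤ -(1 / (s + 1))) hq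
  calc 1 - q / s ≤ 1 + q * -(1 / (s + 1)) := by
        have : q / (s + 1) ≤ q / s := div_le_div_of_nonneg_left (by linarith) hs (by linarith)
        linarith [mul_one_div q (s + 1)]
    _ ≤ (1 + -(1 / (s + 1))) ^ q := hbern
    _ = (s / (s + 1)) ^ q := by congr 1; field_simp; ring

lemma one_sub_div_mul_add_div_sq_le {q q' s : ℝ} (hq : 1 < q) (hq' : 0 ≤ q') (hs : 0 < s) :
    (1 - q / s) * (q' / ((q - 1) * s)) + q' / s ^ 2 ≤ q' / ((q - 1) * (s + 1)) := by
  have hq1 : 0 < q - 1 := by linarith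
  have hgap : q' / ((q - 1) * (s + 1)) - ((1 - q / s) * (q' / ((q - 1) * s)) + q' / s ^ 2)
      = q' / ((q - 1) * s ^ 2 * (s + 1)) := by
    field_simp
    ring
  have : 0 ≤ q' / ((q - 1) * s ^ 2 * (s + 1)) := by positivity
  linarith

lemma posPart_le_mul_posPart {x y f : ℝ} (hf : 0 ≤ f) (h : y ≤ f * x) : y⁺ ≤ f * x⁺ :=
  sup_le (h.trans (mul_le_mul_of_nonneg_left (le_posPart x) hf)) (mul_nonneg hf (posPart_nonneg x))

theorem posPart_le_div_rpow_of_le_one_sub_div_mul {x : ℕ → ℝ} {q t₀ : ℝ} {N : ℕ} (hq : 1 ≤ q)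
    (hN : q ≤ N + t₀) (hrec : ∀ t, N ≤ t → x (t + 1) ≤ (1 - q / (t + t₀)) * x t) :
    ∀ t, N ≤ t → (x t)⁺ ≤ (x N)⁺ * ((N : ℝ) + t₀) ^ q / ((t : ℝ) + t₀) ^ q := by
  have hq_le : ∀ t, N ≤ t → q ≤ (t : ℝ) + t₀ := fun t ht => by
    have : (N : ℝ) ≤ t := by exact_mod_cast ht
    linarith
  have hstep : ∀ t, N ≤ t →
      (x (t + 1))⁺ * ((t + 1 : ℕ) + t₀) ^ q ≤ (x t)⁺ * ((t : ℝ) + t₀) ^ q := by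
    intro t ht
    set s : ℝ := (t : ℝ) + t₀
    have hs : 0 < s := by linarith [hq_le t ht]
    have hf : 0 ≤ 1 - q / s := by rw [sub_nonneg, div_le_one hs]; exact hq_le t ht
    have hs1 : ((t + 1 : ℕ) : ℝ) + t₀ = s + 1 := by push_cast; ring
    rw [hs1]
    calc (x (t + 1))⁺ * (s + 1) ^ q ≤ (1 - q / s) * (x t)⁺ * (s + 1) ^ q := by
          gcongr
          exact posPart_le_mul_posPart hf (hrec t ht)
      _ ≤ (s / (s + 1)) ^ q * (x t)⁺ * (s + 1) ^ q := by
          gcongr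
          exact one_sub_div_le_div_add_one_rpow hq hs
      _ = (x t)⁺ * s ^ q := by
          rw [Real.div_rpow hs.le (by linarith)]
          field_simp
  intro t ht
  have hts : 0 < (t : ℝ) + t₀ := by linarith [hq_le t ht]
  rw [le_div_iff₀ (Real.rpow_pos_of_pos hts q)]
  induction t, ht using Nat.le_induction with
  | base => exact le_rfl
  | succ t ht ih => exact (hstep t ht).trans (ih (by linarith [hq_le t ht]))

lemma natCast_rpow_neg_isLittleO_one_div {q : ℝ} (hq : 1 < q) :
    (fun T : ℕ => (T : ℝ) ^ (-q)) =o[atTop] fun T => 1 / (T : ℝ) := by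
  refine (isLittleO_iff_tendsto' ?_).2 ?_
  · filter_upwards [eventually_gt_atTop 0] with T hT h
    simp [hT.ne'] at h
  · have hlim : Tendsto (fun T : ℕ => (T : ℝ) ^ (-(q - 1))) atTop (nhds 0) :=
      (tendsto_rpow_neg_atTop (by linarith)).comp tendsto_natCast_atTop_atTop
    refine hlim.congr' ?_
    filter_upwards [eventually_gt_atTop 0] with T hT
    have hT' : (0 : ℝ) < T := by exact_mod_cast hT
    rw [div_div_eq_mul_div, div_one, neg_sub, Real.rpow_sub hT', Real.rpow_one,
      Real.rpow_neg hT'.le]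
    field_simp

theorem isLittleO_one_div_of_le_div_rpow {u : ℕ → ℝ} {K q t₀ : ℝ} (hq : 1 < q) (ht₀ : 0 ≤ t₀)
    (hu : ∀ᶠ T in atTop, 0 ≤ u T ∧ u T ≤ K / ((T : ℝ) + t₀) ^ q) :
    u =o[atTop] fun T => 1 / (T : ℝ) := by
  refine IsBigO.trans_isLittleO ?_ (natCast_rpow_neg_isLittleO_one_div hq)
  refine IsBigO.of_bound K ?_
  filter_upwards [hu, eventually_gt_atTop 0] with T ⟨hu0, huK⟩ hT
  have hT' : (0 : ℝ) < T := by exact_mod_cast hT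
  have hp : 0 < ((T : ℝ) + t₀) ^ q := Real.rpow_pos_of_pos (by linarith) q
  have hK : 0 ≤ K := (mul_nonneg hu0 hp.le).trans ((le_div_iff₀ hp).1 huK)
  rw [Real.norm_of_nonneg hu0, Real.norm_of_nonneg (Real.rpow_nonneg hT'.le _),
    Real.rpow_neg hT'.le, ← div_eq_mul_inv]
  calc u T ≤ K / ((T : ℝ) + t₀) ^ q := huK
    _ ≤ K / (T : ℝ) ^ q := by gcongr; linarith

end Chung

open Chung in
theorem chung_lemma_1_general
    (a : ℕ → ℝ) (q q' t₀ : ℝ)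
    (hq : 1 < q) (hq' : 0 < q') (ht₀ : 0 ≤ t₀)
    (hrec : ∀ t : ℕ, 1 ≤ t →
      a (t + 1) ≤ (1 - q / ((t : ℝ) + t₀)) * a t + q' / ((t : ℝ) + t₀) ^ 2) :
    ∃ e : ℕ → ℝ, (e =o[atTop] fun T : ℕ => 1 / (T : ℝ)) ∧
      ∀ T : ℕ, 1 ≤ T → a T ≤ q' / ((q - 1) * ((T : ℝ) + t₀)) + e T := by
  set b : ℕ → ℝ := fun t => q' / ((q - 1) * ((t : ℝ) + t₀))
  set e : ℕ → ℝ := fun t => (a t - b t)⁺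
  have hdiff : ∀ t : ℕ, 1 ≤ t → a (t + 1) - b (t + 1) ≤ (1 - q / (t + t₀)) * (a t - b t) := by
    intro t ht
    have hs : (0 : ℝ) < t + t₀ := by
      have : (1 : ℝ) ≤ t := by exact_mod_cast ht
      linarith
    have hsuper := one_sub_div_mul_add_div_sq_le hq hq'.le hs
    simp only [b, Nat.cast_add, Nat.cast_one, add_right_comm _ (1 : ℝ)] at hsuper ⊢
    linarith [hrec t ht]
  set N : ℕ := max 1 ⌈q⌉₊
  have hN : q ≤ N + t₀ := by
    have : (⌈q⌉₊ : ℝ) ≤ N := by exact_mod_cast le_max_right 1 ⌈q⌉₊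
    linarith [Nat.le_ceil q]
  have hdecay := posPart_le_div_rpow_of_le_one_sub_div_mul (x := fun t => a t - b t) hq.le hN
    fun t ht => hdiff t (le_of_max_le_left ht)
  have hsmall : e =o[atTop] fun T : ℕ => 1 / (T : ℝ) := by
    refine isLittleO_one_div_of_le_div_rpow (K := e N * ((N : ℝ) + t₀) ^ q) hq ht₀ ?_
    filter_upwards [eventually_ge_atTop N] with T hT
    exact ⟨posPart_nonneg _, hdecay T hT⟩
  exact ⟨e, hsmall, fun T _ => by linarith [le_posPart (a T - b T)]⟩

/-- Chung's Lemma 1 (Chung 1954). -/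
theorem chung_lemma_1
    (a : ℕ → ℝ) (q q' t₀ : ℝ)
    (ha : ∀ t, 0 ≤ a t)
    (hq : 1 < q) (hq' : 0 < q') (ht₀ : 0 ≤ t₀)
    (hrec : ∀ t : ℕ, 1 ≤ t →
      a (t + 1) ≤ (1 - q / ((t : ℝ) + t₀)) * a t + q' / ((t : ℝ) + t₀) ^ 2) :
    ∃ e : ℕ → ℝ, (e =o[atTop] fun T : ℕ => 1 / (T : ℝ)) ∧
      ∀ T : ℕ, 1 ≤ T → a T ≤ q' / ((q - 1) * ((T : ℝ) + t₀)) + e T :=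
  chung_lemma_1_general a q q' t₀ hq hq' ht₀ hrec
end

section
/- For the Tsallis distance-generating function h(x) = −(1/(q(1−q)))·(x^q + (1−x)^q) on [0,1] with q ∈ (0,1) ∪ (1,2), the Bregman divergence at the boundary point 0 satisfies D(0,x) = Θ(x^{min(q,2)}) as x → 0⁺; consequently the Legendre exponent of h at 0 is max(0, 1 − q/2). -/
/-!
Split `D(0,x) = x^q/q + R(x)`, where `R(x)` is the divergence `D(0,x)` of the smooth summand
`-(1-x)^q/(q(1-q))`. Since `R(0) = 0` and `R'(x) = x(1-x)^{q-2}`, the mean value theorem gives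
`0 ≤ R(x) ≤ 4x²` on `[0,1/2]`, and `x² ≤ x^q` there because `q < 2`. Hence `D(0,x) = Θ(x^q)`,
which matches `|x|^{2(1-β)}` exactly for `β = 1 - q/2` and beats every larger power of `x`.
-/

open Real Set Filter Topology

noncomputable def tsallisRemainder (q x : ℝ) : ℝ :=
  -(1 / (q * (1 - q))) * (1 - (1 - x) ^ q - q * (1 - x) ^ (q - 1) * x)

lemma hasDerivAt_tsallisRemainder {q x : ℝ} (hq0 : q ≠ 0) (hq1 : q ≠ 1) (hx : x < 1) :
    HasDerivAt (tsallisRemainder q) (x * (1 - x) ^ (q - 2)) x := by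
  have hpos : 0 < 1 - x := by linarith
  have hsub : HasDerivAt (fun y : ℝ => 1 - y) (-1) x := (hasDerivAt_id x).const_sub 1
  have hpow : ∀ s : ℝ, HasDerivAt (fun y : ℝ => (1 - y) ^ s) (s * (1 - x) ^ (s - 1) * -1) x :=
    fun s => (hasDerivAt_rpow_const (Or.inl hpos.ne')).comp x hsub
  have h := (((hpow q).const_sub 1).sub
    (((hpow (q - 1)).const_mul q).mul (hasDerivAt_id x))).const_mul (-(1 / (q * (1 - q))))
  rw [show q - 1 - 1 = q - 2 by ring] at h
  refine h.congr_deriv ?_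
  have hq1' : 1 - q ≠ 0 := sub_ne_zero.mpr (Ne.symm hq1)
  have hsplit : (1 - x) ^ (q - 1) = (1 - x) ^ (q - 2) * (1 - x) := by
    rw [← rpow_add_one hpos.ne']; ring_nf
  rw [hsplit, id]
  field_simp
  ring

lemma rpow_le_four_of_half_le {y s : ℝ} (hy : 1 / 2 ≤ y) (hs : -2 ≤ s) (hs0 : s ≤ 0) :
    y ^ s ≤ 4 :=
  calc y ^ s ≤ (1 / 2) ^ s := rpow_le_rpow_of_nonpos (by norm_num) hy hs0
    _ ≤ (1 / 2) ^ (-2 : ℝ) := rpow_le_rpow_of_exponent_ge (by norm_num) (by norm_num) hs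
    _ = 4 := by norm_num

lemma tsallisRemainder_mem_Icc {q x : ℝ} (hq0 : 0 < q) (hq2 : q < 2) (hq1 : q ≠ 1)
    (hx0 : 0 < x) (hx : x ≤ 1 / 2) :
    tsallisRemainder q x ∈ Icc 0 (4 * x ^ 2) := by
  have hderiv : ∀ y < 1, HasDerivAt (tsallisRemainder q) (y * (1 - y) ^ (q - 2)) y :=
    fun y hy => hasDerivAt_tsallisRemainder hq0.ne' hq1 hy
  obtain ⟨ξ, ⟨hξ0, hξx⟩, hslope⟩ := exists_hasDerivAt_eq_slope (tsallisRemainder q)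
    (fun y => y * (1 - y) ^ (q - 2)) hx0
    (fun y hy => (hderiv y (by linarith [hy.2])).continuousAt.continuousWithinAt)
    (fun y hy => hderiv y (by linarith [hy.2]))
  have hR : tsallisRemainder q x = ξ * (1 - ξ) ^ (q - 2) * x := by
    rw [hslope, show tsallisRemainder q 0 = 0 by simp [tsallisRemainder], sub_zero, sub_zero,
      div_mul_cancel₀ _ hx0.ne']
  have hfac : (1 - ξ) ^ (q - 2) ≤ 4 :=
    rpow_le_four_of_half_le (by linarith) (by linarith) (by linarith)
  have hfac0 : 0 ≤ (1 - ξ) ^ (q - 2) := rpow_nonneg (by linarith) _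
  rw [hR]
  constructor
  · positivity
  · nlinarith [mul_le_mul_of_nonneg_left hfac hξ0.le]

lemma sq_le_rpow_of_le_two {x q : ℝ} (hx0 : 0 < x) (hx1 : x ≤ 1) (hq2 : q ≤ 2) :
    x ^ 2 ≤ x ^ q := by
  simpa only [rpow_two] using rpow_le_rpow_of_exponent_ge hx0 hx1 hq2

lemma tsallis_divergence_mem_Icc {q x : ℝ} (hq0 : 0 < q) (hq2 : q < 2) (hq1 : q ≠ 1)
    (hx0 : 0 < x) (hx : x ≤ 1 / 2) :
    x ^ q / q + tsallisRemainder q x ∈ Icc (1 / q * x ^ q) ((1 / q + 4) * x ^ q) := by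
  obtain ⟨hR0, hR4⟩ := tsallisRemainder_mem_Icc hq0 hq2 hq1 hx0 hx
  have hsq := sq_le_rpow_of_le_two hx0 (by linarith) hq2.le
  constructor <;> [skip; rw [add_mul]] <;> rw [one_div_mul_eq_div] <;> linarith

lemma exists_mul_rpow_lt_mul_rpow {p r c : ℝ} (hpr : p < r) (hc : 0 < c) (K : ℝ) {δ : ℝ}
    (hδ : 0 < δ) : ∃ x, 0 < x ∧ x < δ ∧ K * x ^ r < c * x ^ p := by
  have hε : 0 < r - p := sub_pos.mpr hpr
  have htend : Tendsto (fun x : ℝ => K * x ^ (r - p)) (𝓝[>] 0) (𝓝 0) := by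
    have := ((continuousAt_rpow_const 0 (r - p) (Or.inr hε.le)).tendsto.const_mul K)
    rw [zero_rpow hε.ne', mul_zero] at this
    exact this.mono_left nhdsWithin_le_nhds
  obtain ⟨x, hsmall, hxδ, hx0⟩ := ((htend.eventually (gt_mem_nhds hc)).and
    (((gt_mem_nhds hδ).filter_mono nhdsWithin_le_nhds).and self_mem_nhdsWithin)).exists
  refine ⟨x, hx0, hxδ, ?_⟩
  have hsplit : x ^ r = x ^ (r - p) * x ^ p := by rw [← rpow_add hx0]; ring_nf
  rw [hsplit, ← mul_assoc]
  exact mul_lt_mul_of_pos_right hsmall (rpow_pos_of_pos hx0 p)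

/-- Tsallis DGF on `[0,1]`: at the boundary point `0` the Bregman divergence
is `Θ(x^{min(q,2)})`, so the Legendre exponent at `0` is `max(0, 1 − q/2)`. -/
theorem tsallis_legendre_exponent_at_zero
    (q : ℝ) (hq : (0 < q ∧ q < 1) ∨ (1 < q ∧ q < 2))
    (D : ℝ → ℝ → ℝ)
    (hD : ∀ x ∈ Set.Ioo (0:ℝ) 1,
      D 0 x = x ^ q / q -
        (1 / (q * (1 - q))) * (1 - (1 - x) ^ q - q * (1 - x) ^ (q - 1) * x)) :
    (∃ c C : ℝ, 0 < c ∧ 0 < C ∧ ∃ δ > (0:ℝ), ∀ x : ℝ, 0 < x → x < δ →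
      c * x ^ min q 2 ≤ D 0 x ∧ D 0 x ≤ C * x ^ min q 2) ∧
    (∃ K ≥ (0:ℝ), ∃ δ > (0:ℝ), ∀ x : ℝ, 0 < x → x < δ →
      D 0 x ≤ K / 2 * |x| ^ (2 * (1 - max 0 (1 - q / 2)))) ∧
    (∀ β : ℝ, 0 ≤ β → β < max 0 (1 - q / 2) →
      ¬ ∃ K ≥ (0:ℝ), ∃ δ > (0:ℝ), ∀ x : ℝ, 0 < x → x < δ →
        D 0 x ≤ K / 2 * |x| ^ (2 * (1 - β))) := by
  obtain ⟨hq0, hq2, hq1⟩ : 0 < q ∧ q < 2 ∧ q ≠ 1 := by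
    rcases hq with ⟨h0, h1⟩ | ⟨h1, h2⟩ <;> refine ⟨?_, ?_, ?_⟩ <;> linarith
  rw [min_eq_left hq2.le, max_eq_right (by linarith)]
  have hbounds : ∀ x, 0 < x → x < 1 / 2 → D 0 x ∈ Icc (1 / q * x ^ q) ((1 / q + 4) * x ^ q) := by
    intro x hx0 hx
    rw [hD x ⟨hx0, by linarith⟩, sub_eq_add_neg, ← neg_mul]
    exact tsallis_divergence_mem_Icc hq0 hq2 hq1 hx0 hx.le
  refine ⟨⟨1 / q, 1 / q + 4, by positivity, by positivity, 1 / 2, by norm_num, hbounds⟩,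
    ⟨2 * (1 / q + 4), by positivity, 1 / 2, by norm_num, fun x hx0 hx => ?_⟩,
    fun β _ hβ ⟨K, _, δ, hδ, hle⟩ => ?_⟩
  · rw [abs_of_pos hx0, show 2 * (1 - (1 - q / 2)) = q by ring]
    linarith [(hbounds x hx0 hx).2]
  · obtain ⟨x, hx0, hxδ, hlt⟩ := exists_mul_rpow_lt_mul_rpow (show q < 2 * (1 - β) by linarith)
      (one_div_pos.mpr hq0) (K / 2) (lt_min hδ one_half_pos)
    have hup := hle x hx0 (hxδ.trans_le (min_le_left _ _))
    rw [abs_of_pos hx0] at hup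
    linarith [(hbounds x hx0 (hxδ.trans_le (min_le_right _ _))).1]
end

section
/- Let h(x) = Σᵢ xᵢ log xᵢ be the negative entropy on the simplex X = {x ∈ ℝ₊ⁿ : Σ xᵢ = 1}, with Kullback–Leibler divergence D(p,x) = Σᵢ pᵢ log(pᵢ/xᵢ). If p lies in the relative interior of X (all pᵢ > 0), then there exist a neighborhood V of p and K > 0 with D(p,x) ≤ (K/2)‖p−x‖² for x ∈ V in the relative interior, i.e. the Legendre exponent at p is 0; whereas if some pᵢ = 0, then D(p,x) ≤ (K/2)‖p−x‖ near p, and this exponent 1/2 is attained, i.e. the Legendre exponent at p is 1/2. -/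
/-!
For `x` in the relative interior of the simplex, `log y ≤ y - 1` bounds `D(p, x)` above by the
χ²-divergence `∑ (pᵢ - xᵢ)² / xᵢ` and below by the mass `∑_{pᵢ = 0} xᵢ` that `x` puts off the
support of `p`. Near `p` we have `pᵢ ≤ 2 xᵢ`, so each χ² term is at most `(2 / pᵢ) (pᵢ - xᵢ)²`
when `pᵢ > 0`, and at most `|pᵢ - xᵢ|` in any case. Conversely, if some `pᵢ = 0`, along the segment
from `p` to the uniform distribution the mass off the support grows linearly in `‖p - x‖`, which
no bound `O(‖p - x‖ ^ e)` with `e > 1` can match.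
-/

open Real Filter Topology Finset

lemma mul_log_div_le_sub_add_sq_div {a b : ℝ} (ha : 0 ≤ a) (hb : 0 < b) :
    a * log (a / b) ≤ a - b + (a - b) ^ 2 / b := by
  rcases ha.eq_or_lt with rfl | ha
  · simp [sq, hb.ne']
  · calc a * log (a / b) ≤ a * (a / b - 1) :=
          mul_le_mul_of_nonneg_left (log_le_sub_one_of_pos (by positivity)) ha.le
      _ = a - b + (a - b) ^ 2 / b := by field_simp; ring

lemma sub_le_mul_log_div {a b : ℝ} (ha : 0 < a) (hb : 0 < b) : a - b ≤ a * log (a / b) := by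
  have h := one_sub_inv_le_log_of_pos (div_pos ha hb)
  rw [inv_div] at h
  calc a - b = a * (1 - b / a) := by field_simp
    _ ≤ a * log (a / b) := mul_le_mul_of_nonneg_left h ha.le

lemma sq_sub_div_le_abs_sub {a b : ℝ} (ha : 0 ≤ a) (hab : a ≤ 2 * b) (hb : 0 < b) :
    (a - b) ^ 2 / b ≤ |a - b| := by
  have h : |a - b| ≤ b := abs_le.mpr ⟨by linarith, by linarith⟩
  rw [div_le_iff₀ hb, ← sq_abs]
  nlinarith [abs_nonneg (a - b)]

lemma sq_sub_div_le_two_div_mul_sq {a b : ℝ} (ha : 0 < a) (hab : a ≤ 2 * b) :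
    (a - b) ^ 2 / b ≤ 2 / a * (a - b) ^ 2 := by
  rw [div_mul_eq_mul_div, div_le_div_iff₀ (by linarith) ha]
  nlinarith [sq_nonneg (a - b)]

lemma not_eventually_mul_le_mul_rpow {c e : ℝ} (hc : 0 < c) (he : 1 < e) (a : ℝ) :
    ¬ ∀ᶠ t in 𝓝[>] (0 : ℝ), c * t ≤ a * t ^ e := by
  intro h
  have hlim : Tendsto (fun t : ℝ => a * t ^ (e - 1)) (𝓝[>] 0) (𝓝 0) := by
    have := ((continuous_id.rpow_const fun _ => Or.inr (by linarith : 0 ≤ e - 1)).const_mul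
      a).tendsto 0
    simp only [id, zero_rpow (by linarith : e - 1 ≠ 0), mul_zero] at this
    exact this.mono_left nhdsWithin_le_nhds
  obtain ⟨t, ht, hle, hsmall⟩ :=
    ((eventually_mem_nhdsWithin (a := (0 : ℝ)) (s := Set.Ioi 0)).and
      (h.and (hlim.eventually (gt_mem_nhds hc)))).exists
  have ht : (0 : ℝ) < t := ht
  have hsplit : a * t ^ e = a * t ^ (e - 1) * t := by
    rw [mul_assoc, ← rpow_add_one ht.ne', sub_add_cancel]
  nlinarith [hsplit]

section FiniteSums

variable {ι : Type*} [Fintype ι] {p x : ι → ℝ}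

lemma sum_mul_log_div_le_sum_sq_div (hp : ∀ i, 0 ≤ p i) (hx : ∀ i, 0 < x i)
    (hsum : ∑ i, p i = ∑ i, x i) :
    ∑ i, p i * log (p i / x i) ≤ ∑ i, (p i - x i) ^ 2 / x i :=
  calc ∑ i, p i * log (p i / x i) ≤ ∑ i, (p i - x i + (p i - x i) ^ 2 / x i) :=
        sum_le_sum fun i _ => mul_log_div_le_sub_add_sq_div (hp i) (hx i)
    _ = ∑ i, (p i - x i) ^ 2 / x i := by
        rw [sum_add_distrib, sum_sub_distrib, hsum, sub_self, zero_add]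

lemma sum_filter_eq_zero_le_sum_mul_log_div (hp : ∀ i, 0 ≤ p i) (hx : ∀ i, 0 < x i)
    (hsum : ∑ i, p i = ∑ i, x i) :
    ∑ i with p i = 0, x i ≤ ∑ i, p i * log (p i / x i) :=
  calc ∑ i with p i = 0, x i = ∑ i with p i ≠ 0, (p i - x i) := by
        rw [sum_sub_distrib, sum_filter_ne_zero, hsum,
          ← sum_filter_add_sum_filter_not univ (fun i => p i = 0)]
        ring
    _ ≤ ∑ i with p i ≠ 0, p i * log (p i / x i) :=
        sum_le_sum fun i hi => sub_le_mul_log_div ((hp i).lt_of_ne' (mem_filter.1 hi).2) (hx i)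
    _ = ∑ i, p i * log (p i / x i) :=
        sum_filter_of_ne fun i _ h => left_ne_zero_of_mul h

end FiniteSums

section Simplex

variable {ι : Type*} [Fintype ι]

def probSimplex (ι : Type*) [Fintype ι] : Set (EuclideanSpace ℝ ι) :=
  {x | (∀ i, 0 ≤ x i) ∧ ∑ i, x i = 1}

lemma abs_sub_apply_le_norm_sub (p x : EuclideanSpace ℝ ι) (i : ι) : |p i - x i| ≤ ‖p - x‖ := by
  simpa using PiLp.norm_apply_le (p - x) i

lemma eventually_le_two_mul_apply {p : EuclideanSpace ℝ ι} (hp : ∀ i, 0 ≤ p i) :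
    ∀ᶠ x in 𝓝 p, ∀ i, 0 ≤ x i → p i ≤ 2 * x i := by
  refine eventually_all.2 fun i => ?_
  rcases (hp i).eq_or_lt with hi | hi
  · exact Eventually.of_forall fun x hx => by linarith
  · have hlt : p i < 2 * p i := by linarith
    filter_upwards [((continuous_const.mul (PiLp.continuous_apply 2 _ i)).tendsto p).eventually
      (lt_mem_nhds hlt)] with x hx _ using hx.le

variable {p x : EuclideanSpace ℝ ι}

lemma sum_mul_log_div_le_card_mul_norm (hp : ∀ i, 0 ≤ p i) (hx : ∀ i, 0 < x i)
    (hsum : ∑ i, p i = ∑ i, x i) (hpx : ∀ i, p i ≤ 2 * x i) :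
    ∑ i, p i * log (p i / x i) ≤ Fintype.card ι * ‖p - x‖ :=
  calc ∑ i, p i * log (p i / x i) ≤ ∑ i, (p i - x i) ^ 2 / x i :=
        sum_mul_log_div_le_sum_sq_div hp hx hsum
    _ ≤ ∑ _i : ι, ‖p - x‖ := sum_le_sum fun i _ =>
        (sq_sub_div_le_abs_sub (hp i) (hpx i) (hx i)).trans (abs_sub_apply_le_norm_sub p x i)
    _ = Fintype.card ι * ‖p - x‖ := by simp

lemma sum_mul_log_div_le_mul_norm_sq (hp : ∀ i, 0 < p i) (hx : ∀ i, 0 < x i)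
    (hsum : ∑ i, p i = ∑ i, x i) (hpx : ∀ i, p i ≤ 2 * x i) :
    ∑ i, p i * log (p i / x i) ≤ (∑ i, 2 / p i) * ‖p - x‖ ^ 2 :=
  calc ∑ i, p i * log (p i / x i) ≤ ∑ i, (p i - x i) ^ 2 / x i :=
        sum_mul_log_div_le_sum_sq_div (fun i => (hp i).le) hx hsum
    _ ≤ ∑ i, 2 / p i * ‖p - x‖ ^ 2 := sum_le_sum fun i _ =>
        (sq_sub_div_le_two_div_mul_sq (hp i) (hpx i)).trans <|
          mul_le_mul_of_nonneg_left
            (sq_le_sq.2 ((abs_sub_apply_le_norm_sub p x i).trans (le_abs_self _)))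
            (div_pos two_pos (hp i)).le
    _ = (∑ i, 2 / p i) * ‖p - x‖ ^ 2 := (sum_mul ..).symm

theorem exists_nhds_sum_mul_log_div_le_mul_norm_sq (hp : p ∈ probSimplex ι)
    (hpos : ∀ i, 0 < p i) :
    ∃ V ∈ 𝓝 p, ∃ K > (0 : ℝ), ∀ x ∈ V, x ∈ probSimplex ι → (∀ i, 0 < x i) →
      ∑ i, p i * log (p i / x i) ≤ K / 2 * ‖p - x‖ ^ 2 := by
  have hne : (univ : Finset ι).Nonempty := nonempty_of_sum_ne_zero (hp.2 ▸ one_ne_zero)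
  refine ⟨_, eventually_le_two_mul_apply hp.1, 2 * ∑ i, 2 / p i,
    mul_pos two_pos (sum_pos (fun i _ => div_pos two_pos (hpos i)) hne), fun x hxV hx hxpos => ?_⟩
  rw [mul_div_cancel_left₀ _ two_ne_zero]
  exact sum_mul_log_div_le_mul_norm_sq hpos hxpos (hp.2.trans hx.2.symm) fun i => hxV i (hx.1 i)

theorem exists_nhds_sum_mul_log_div_le_mul_norm (hp : p ∈ probSimplex ι) :
    ∃ V ∈ 𝓝 p, ∃ K > (0 : ℝ), ∀ x ∈ V, x ∈ probSimplex ι → (∀ i, 0 < x i) →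
      ∑ i, p i * log (p i / x i) ≤ K / 2 * ‖p - x‖ := by
  have hne : (univ : Finset ι).Nonempty := nonempty_of_sum_ne_zero (hp.2 ▸ one_ne_zero)
  refine ⟨_, eventually_le_two_mul_apply hp.1, 2 * Fintype.card ι,
    mul_pos two_pos (Nat.cast_pos.2 (card_pos.2 hne)), fun x hxV hx hxpos => ?_⟩
  rw [mul_div_cancel_left₀ _ two_ne_zero]
  exact sum_mul_log_div_le_card_mul_norm hp.1 hxpos (hp.2.trans hx.2.symm) fun i => hxV i (hx.1 i)

lemma add_smul_sub_mem_probSimplex {p q : EuclideanSpace ℝ ι} (hp : p ∈ probSimplex ι)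
    (hqpos : ∀ i, 0 < q i) (hq : ∑ i, q i = 1) {t : ℝ} (ht0 : 0 < t) (ht1 : t ≤ 1) :
    p + t • (q - p) ∈ probSimplex ι ∧ ∀ i, 0 < (p + t • (q - p)) i := by
  have hpos : ∀ i, 0 < (p + t • (q - p)) i := fun i => by
    have := hp.1 i
    have := hqpos i
    simp only [PiLp.add_apply, PiLp.smul_apply, PiLp.sub_apply, smul_eq_mul]
    nlinarith
  refine ⟨⟨fun i => (hpos i).le, ?_⟩, hpos⟩
  simp only [PiLp.add_apply, PiLp.smul_apply, PiLp.sub_apply, smul_eq_mul, sum_add_distrib,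
    ← mul_sum, sum_sub_distrib, hp.2, hq, sub_self, mul_zero, add_zero]

theorem not_forall_sum_mul_log_div_le_mul_norm_rpow (hp : p ∈ probSimplex ι)
    (hzero : ∃ i, p i = 0) {e : ℝ} (he : 1 < e) {V : Set (EuclideanSpace ℝ ι)} (hV : V ∈ 𝓝 p)
    (K : ℝ) :
    ¬ ∀ x ∈ V, x ∈ probSimplex ι → (∀ i, 0 < x i) →
      ∑ i, p i * log (p i / x i) ≤ K / 2 * ‖p - x‖ ^ e := by
  intro hbound
  obtain ⟨i₀, hi₀⟩ := hzero
  set q : EuclideanSpace ℝ ι := WithLp.toLp 2 fun _ => (Fintype.card ι : ℝ)⁻¹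
  have hcard : (0 : ℝ) < Fintype.card ι := Nat.cast_pos.2 (Fintype.card_pos_iff.2 ⟨i₀⟩)
  have hqpos : ∀ i, 0 < q i := fun i => by simp [q, hcard]
  have hq : ∑ i, q i = 1 := by simp [q, hcard.ne']
  set c := ∑ i with p i = 0, q i
  have hc : 0 < c := sum_pos (fun i _ => hqpos i) ⟨i₀, by simp [hi₀]⟩
  have hlim : Tendsto (fun t : ℝ => p + t • (q - p)) (𝓝[>] 0) (𝓝 p) :=
    ((continuous_const.add (continuous_id.smul continuous_const)).tendsto' 0 p
      (by simp)).mono_left nhdsWithin_le_nhds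
  refine not_eventually_mul_le_mul_rpow hc he (K / 2 * ‖q - p‖ ^ e) ?_
  filter_upwards [hlim hV, Ioc_mem_nhdsGT one_pos] with t htV ⟨ht0, ht1⟩
  obtain ⟨hx, hxpos⟩ := add_smul_sub_mem_probSimplex hp hqpos hq ht0 ht1
  calc c * t = ∑ i with p i = 0, (p + t • (q - p)) i := by
        rw [sum_mul]
        refine sum_congr rfl fun i hi => ?_
        simp [(mem_filter.1 hi).2, mul_comm]
    _ ≤ ∑ i, p i * log (p i / (p + t • (q - p)) i) :=
        sum_filter_eq_zero_le_sum_mul_log_div hp.1 hxpos (hp.2.trans hx.2.symm)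
    _ ≤ K / 2 * ‖p - (p + t • (q - p))‖ ^ e := hbound _ htV hx hxpos
    _ = K / 2 * ‖q - p‖ ^ e * t ^ e := by
        rw [sub_add_cancel_left, norm_neg, norm_smul, norm_of_nonneg ht0.le,
          mul_rpow ht0.le (norm_nonneg _)]
        ring

end Simplex

/-- Legendre exponent of the negative entropy on the simplex: `0` at interior
points, `1/2` at boundary points. -/
theorem entropy_simplex_legendre_exponent
    {n : ℕ}
    (X : Set (EuclideanSpace ℝ (Fin n)))
    (hX : X = {x : EuclideanSpace ℝ (Fin n) | (∀ i, 0 ≤ x i) ∧ ∑ i, x i = 1})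
    (D : EuclideanSpace ℝ (Fin n) → EuclideanSpace ℝ (Fin n) → ℝ)
    (hD : ∀ p x, D p x = ∑ i, p i * Real.log (p i / x i))
    (p : EuclideanSpace ℝ (Fin n)) (hp : p ∈ X) :
    ((∀ i, 0 < p i) →
      ∃ V ∈ nhds p, ∃ K > (0:ℝ), ∀ x ∈ V, x ∈ X → (∀ i, 0 < x i) →
        D p x ≤ K / 2 * ‖p - x‖ ^ 2) ∧
    ((∃ i, p i = 0) →
      (∃ V ∈ nhds p, ∃ K > (0:ℝ), ∀ x ∈ V, x ∈ X → (∀ i, 0 < x i) →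
        D p x ≤ K / 2 * ‖p - x‖) ∧
      (∀ β : ℝ, 0 ≤ β → β < 1/2 →
        ¬ ∃ V ∈ nhds p, ∃ K ≥ (0:ℝ), ∀ x ∈ V, x ∈ X → (∀ i, 0 < x i) →
          D p x ≤ K / 2 * ‖p - x‖ ^ (2 * (1 - β)))) := by
  subst hX
  obtain rfl : D = fun p x => ∑ i, p i * Real.log (p i / x i) := funext₂ hD
  refine ⟨exists_nhds_sum_mul_log_div_le_mul_norm_sq hp,
    fun hzero => ⟨exists_nhds_sum_mul_log_div_le_mul_norm hp, ?_⟩⟩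
  rintro β - hβ ⟨V, hV, K, -, hbound⟩
  exact not_forall_sum_mul_log_div_le_mul_norm_rpow hp hzero (by linarith) hV K hbound
end

section
/- Let X be the closed unit Euclidean ball in ℝⁿ and h(x) = −√(1 − ‖x‖²) the Hellinger regularizer, with Bregman divergence D(p,x) = (1 − Σᵢ pᵢxᵢ)/√(1 − ‖x‖²) for ‖p‖ = 1 and ‖x‖ < 1. Then h fails Bregman reciprocity at boundary points: for every p with ‖p‖ = 1 and every r > 0 there exists a sequence xₙ with ‖xₙ‖ < 1, ‖xₙ − p‖ → 0, and D(p, xₙ) = r for all n. -/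
/-!
Fix a unit vector `q ⊥ p` (this needs `n ≥ 2`). Along `x = (1 - ε) p + s q` we have
`1 - ⟪p, x⟫ = ε`, and choosing `s² = 2ε - ε² - ε²/r²` makes `√(1 - ‖x‖²) = ε / r`, so `D(p, x) = r`
for every small `ε > 0`, while `x → p` as `ε → 0`: the level set `S_r(p)` accumulates at `p`.
-/

open Real Filter Topology
open scoped RealInnerProductSpace

section

variable {E : Type*} [NormedAddCommGroup E] [InnerProductSpace ℝ E]

theorem exists_inner_eq_zero_norm_eq_one [FiniteDimensional ℝ E]
    (hE : 2 ≤ Module.finrank ℝ E) (p : E) : ∃ q : E, ⟪p, q⟫ = 0 ∧ ‖q‖ = 1 := by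
  have hrank : Module.finrank ℝ (ℝ ∙ p)ᗮ ≠ 0 := by
    have hsum := (ℝ ∙ p).finrank_add_finrank_orthogonal
    have hspan : Module.finrank ℝ (ℝ ∙ p) ≤ 1 := by
      simpa using finrank_span_le_card ({p} : Set E)
    omega
  obtain ⟨v, hv, hv0⟩ :=
    Submodule.exists_mem_ne_zero_of_ne_bot (mt Submodule.finrank_eq_zero.2 hrank)
  refine ⟨‖v‖⁻¹ • v, ?_, norm_smul_inv_norm hv0⟩
  rw [inner_smul_right, Submodule.mem_orthogonal_singleton_iff_inner_right.1 hv, mul_zero]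

noncomputable def hellingerCurve (p q : E) (r ε : ℝ) : E :=
  (1 - ε) • p + √(ε * (2 - ε - ε / r ^ 2)) • q

variable {p q : E} {r : ℝ}

theorem continuous_hellingerCurve : Continuous (hellingerCurve p q r) := by
  unfold hellingerCurve; fun_prop

@[simp]
theorem hellingerCurve_zero : hellingerCurve p q r 0 = p := by
  simp [hellingerCurve]

theorem inner_hellingerCurve (hp : ‖p‖ = 1) (hpq : ⟪p, q⟫ = 0) (ε : ℝ) :
    ⟪p, hellingerCurve p q r ε⟫ = 1 - ε := by
  rw [hellingerCurve, inner_add_right, real_inner_smul_right, real_inner_smul_right, hpq,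
    real_inner_self_eq_norm_sq, hp]
  ring

theorem norm_hellingerCurve_sq (hp : ‖p‖ = 1) (hq : ‖q‖ = 1) (hpq : ⟪p, q⟫ = 0) (hr : 0 < r)
    {ε : ℝ} (hε : ε ∈ Set.Ioc 0 (min 1 (r ^ 2))) :
    ‖hellingerCurve p q r ε‖ ^ 2 = 1 - (ε / r) ^ 2 := by
  obtain ⟨hε₀, hε₁, hεr⟩ : 0 < ε ∧ ε ≤ 1 ∧ ε ≤ r ^ 2 := by simpa using hε
  have hrad : 0 ≤ ε * (2 - ε - ε / r ^ 2) := by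
    have : ε / r ^ 2 ≤ 1 := (div_le_one (by positivity)).2 hεr
    nlinarith
  have horth : ⟪(1 - ε) • p, √(ε * (2 - ε - ε / r ^ 2)) • q⟫ = 0 := by
    rw [real_inner_smul_left, real_inner_smul_right, hpq, mul_zero, mul_zero]
  rw [hellingerCurve, norm_add_sq_real, horth, norm_smul, norm_smul, hp, hq, Real.norm_eq_abs,
    Real.norm_eq_abs, mul_pow, mul_pow, sq_abs, sq_abs, sq_sqrt hrad]
  field_simp
  ring

theorem norm_hellingerCurve_lt_one (hp : ‖p‖ = 1) (hq : ‖q‖ = 1) (hpq : ⟪p, q⟫ = 0)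
    (hr : 0 < r) {ε : ℝ} (hε : ε ∈ Set.Ioc 0 (min 1 (r ^ 2))) : ‖hellingerCurve p q r ε‖ < 1 := by
  have : 0 < (ε / r) ^ 2 := by have := hε.1; positivity
  refine (sq_lt_one_iff₀ (norm_nonneg _)).1 ?_
  linarith [norm_hellingerCurve_sq hp hq hpq hr hε]

theorem hellingerDivergence_hellingerCurve (hp : ‖p‖ = 1) (hq : ‖q‖ = 1)
    (hpq : ⟪p, q⟫ = 0) (hr : 0 < r) {ε : ℝ} (hε : ε ∈ Set.Ioc 0 (min 1 (r ^ 2))) :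
    (1 - ⟪p, hellingerCurve p q r ε⟫) / √(1 - ‖hellingerCurve p q r ε‖ ^ 2) = r := by
  have := hε.1
  rw [inner_hellingerCurve hp hpq, norm_hellingerCurve_sq hp hq hpq hr hε,
    sub_sub_cancel, sub_sub_cancel, sqrt_sq (by positivity)]
  field_simp

end

theorem EuclideanSpace.real_inner_eq_sum {ι : Type*} [Fintype ι] (x y : EuclideanSpace ℝ ι) :
    ⟪x, y⟫ = ∑ i, x i * y i := by
  simp [PiLp.inner_apply, mul_comm]

/-- Failure of Bregman reciprocity for the Hellinger regularizer on the unit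
ball of `ℝⁿ` (`n ≥ 2`): at any boundary point `p` and for any level `r > 0`
there is a sequence converging to `p` in norm that stays on the Hellinger
sphere of radius `r` around `p`. -/
theorem hellinger_reciprocity_failure
    {n : ℕ} (hn : 2 ≤ n)
    (D : EuclideanSpace ℝ (Fin n) → EuclideanSpace ℝ (Fin n) → ℝ)
    (hD : ∀ p x : EuclideanSpace ℝ (Fin n), ‖p‖ = 1 → ‖x‖ < 1 →
      D p x = (1 - ∑ i, p i * x i) / Real.sqrt (1 - ‖x‖ ^ 2)) :
    ∀ p : EuclideanSpace ℝ (Fin n), ‖p‖ = 1 → ∀ r : ℝ, 0 < r →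
      ∃ x : ℕ → EuclideanSpace ℝ (Fin n),
        (∀ k, ‖x k‖ < 1) ∧
        Tendsto (fun k => ‖x k - p‖) atTop (nhds 0) ∧
        ∀ k, D p (x k) = r := by
  intro p hp r hr
  obtain ⟨q, hpq, hq⟩ := exists_inner_eq_zero_norm_eq_one (by simpa using hn) p
  let ε (k : ℕ) : ℝ := min 1 (r ^ 2) / (k + 1 : ℕ)
  have hε (k : ℕ) : ε k ∈ Set.Ioc 0 (min 1 (r ^ 2)) :=
    ⟨by positivity, div_le_self (by positivity) (by simp)⟩
  have hε_lim : Tendsto ε atTop (𝓝 0) :=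
    (tendsto_const_div_atTop_nhds_zero_nat _).comp (tendsto_add_atTop_nat 1)
  refine ⟨fun k => hellingerCurve p q r (ε k),
    fun k => norm_hellingerCurve_lt_one hp hq hpq hr (hε k), ?_, fun k => ?_⟩
  · refine tendsto_iff_norm_sub_tendsto_zero.1 ?_
    exact (continuous_hellingerCurve.tendsto' 0 p hellingerCurve_zero).comp hε_lim
  · rw [hD p _ hp (norm_hellingerCurve_lt_one hp hq hpq hr (hε k)),
      ← EuclideanSpace.real_inner_eq_sum, hellingerDivergence_hellingerCurve hp hq hpq hr (hε k)]
end
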